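/- Consider the binary univariate Gaussian mixture setup with q_{ia} > 0, σ_{ia} > 0, and posterior η(x,a) = q_{1a} φ_{1a}(x) / (q_{1a} φ_{1a}(x) + q_{0a} φ_{0a}(x)), and assume additionally that μ_{00} ≥ μ_{10} and μ_{01} ≥ μ_{11}. Then the following are equivalent. (i) For every threshold t ∈ (0,1) and every class i ∈ {0,1}: P_{X ~ N(μ_{i0}, σ_{i0}²)}(η(X,0) ≥ t) = P_{X ~ N(μ_{i1}, σ_{i1}²)}(η(X,1) ≥ t); that is, every group-aware threshold classifier 1{η(x,a) ≥ t} (and hence the minimizer of every cost-sensitive risk) satisfies exact equal opportunity and exact equalized odds. (ii) (μ_{01} − μ_{11})/σ_{11} = (μ_{00} − μ_{10})/σ_{10}, σ_{11}/σ_{01} = σ_{10}/σ_{00}, and q_{10}/q_{00} = q_{11}/q_{01}. -/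

import Mathlib

open MeasureTheory ProbabilityTheory

/-- Density of the univariate normal distribution `N(m, s²)`. -/
noncomputable def gaussPdf (m s x : ℝ) : ℝ :=
  (Real.sqrt (2 * Real.pi * s ^ 2))⁻¹ * Real.exp (-(x - m) ^ 2 / (2 * s ^ 2))

/-- The group-aware posterior `η(x, a) = q_{1a} φ_{1a}(x) / (q_{1a} φ_{1a}(x) + q_{0a} φ_{0a}(x))`. -/
noncomputable def posterior (q m s : Fin 2 → Fin 2 → ℝ) (x : ℝ) (a : Fin 2) : ℝ :=
  q 1 a * gaussPdf (m 1 a) (s 1 a) x /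
    (q 1 a * gaussPdf (m 1 a) (s 1 a) x + q 0 a * gaussPdf (m 0 a) (s 0 a) x)

open Real Set

/-!
In the class-1 coordinate `w = (x - m₁ₐ) / s₁ₐ`, the posterior odds `q₀ₐφ₀ₐ/(q₁ₐφ₁ₐ)` of group `a`
are `exp` of a quadratic in `w` that depends only on `κ = q₁ₐ/q₀ₐ`, `r = s₁ₐ/s₀ₐ` and
`δ = (m₀ₐ - m₁ₐ)/s₁ₐ`, while `w` has law `N(0, 1)` under class 1 and `N(δ, r⁻²)` under class 0.
So if the two groups share `(κ, r, δ)`, which is condition (ii), all acceptance rates agree.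
Conversely, equal class-1 acceptance rates at every threshold say that the two quadratics have the
same law under `N(0, 1)`. The first three moments of that law recover the coefficients, since the
linear one, `r²δ`, is nonnegative; and the coefficients determine `(κ, r, δ)`.
-/

lemma integrable_pow_mul_exp_neg_sq_div_two (n : ℕ) :
    Integrable fun z : ℝ ↦ z ^ n * exp (-z ^ 2 / 2) := by
  have h := integrable_rpow_mul_exp_neg_mul_sq (b := 1 / 2) (by norm_num) (s := n)
    (by linarith [n.cast_nonneg (α := ℝ)])
  simp only [rpow_natCast] at h
  convert h using 3 with z
  ring_nf

lemma hasDerivAt_exp_neg_sq_div_two (z : ℝ) :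
    HasDerivAt (fun z : ℝ ↦ exp (-z ^ 2 / 2)) (-z * exp (-z ^ 2 / 2)) z := by
  have h : HasDerivAt (fun z : ℝ ↦ -z ^ 2 / 2) (-z) z :=
    (((hasDerivAt_pow 2 z).neg).div_const 2).congr_deriv (by ring)
  exact h.exp.congr_deriv (mul_comm _ _)

lemma integral_pow_add_two_mul_exp_neg_sq_div_two (n : ℕ) :
    ∫ z : ℝ, z ^ (n + 2) * exp (-z ^ 2 / 2) = (n + 1) * ∫ z : ℝ, z ^ n * exp (-z ^ 2 / 2) := by
  have hderiv (z : ℝ) : HasDerivAt (fun z : ℝ ↦ z ^ (n + 1) * exp (-z ^ 2 / 2))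
      ((n + 1) * (z ^ n * exp (-z ^ 2 / 2)) - z ^ (n + 2) * exp (-z ^ 2 / 2)) z := by
    refine ((hasDerivAt_pow (n + 1) z).mul (hasDerivAt_exp_neg_sq_div_two z)).congr_deriv ?_
    simp only [add_tsub_cancel_right, Nat.cast_add, Nat.cast_one]
    ring
  have hint := integrable_pow_mul_exp_neg_sq_div_two
  have := integral_eq_zero_of_hasDerivAt_of_integrable hderiv
    (((hint n).const_mul _).sub (hint (n + 2))) (hint (n + 1))
  rw [integral_sub ((hint n).const_mul _) (hint (n + 2)), integral_const_mul, sub_eq_zero] at this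
  exact this.symm

lemma integral_gaussianReal_zero_one (f : ℝ → ℝ) :
    ∫ z, f z ∂gaussianReal 0 1 = (√(2 * π))⁻¹ * ∫ z : ℝ, f z * exp (-z ^ 2 / 2) := by
  rw [integral_gaussianReal_eq_integral_smul one_ne_zero, ← integral_const_mul]
  congr 1 with z
  simp only [gaussianPDFReal, NNReal.coe_one, mul_one, sub_zero, smul_eq_mul]
  ring

lemma integral_pow_add_two_gaussianReal (n : ℕ) :
    ∫ z, z ^ (n + 2) ∂gaussianReal 0 1 = (n + 1) * ∫ z, z ^ n ∂gaussianReal 0 1 := by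
  rw [integral_gaussianReal_zero_one, integral_gaussianReal_zero_one,
    integral_pow_add_two_mul_exp_neg_sq_div_two]
  ring

lemma integrable_pow_gaussianReal (μ : ℝ) (v : NNReal) (n : ℕ) :
    Integrable (fun z ↦ z ^ n) (gaussianReal μ v) :=
  (memLp_id_gaussianReal n).integrable_norm_pow'.mono' (by fun_prop)
    (ae_of_all _ fun z ↦ by simp)

lemma integral_polynomial_gaussianReal {f : ℝ → ℝ} (c₀ c₁ c₂ c₃ c₄ c₅ c₆ : ℝ)
    (hf : ∀ z, f z = c₀ + c₁ * z + c₂ * z ^ 2 + c₃ * z ^ 3 + c₄ * z ^ 4 + c₅ * z ^ 5 + c₆ * z ^ 6) :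
    ∫ z, f z ∂gaussianReal 0 1 = c₀ + c₂ + 3 * c₄ + 15 * c₆ := by
  have h (n : ℕ) (c : ℝ) : Integrable (fun z ↦ c * z ^ n) (gaussianReal 0 1) :=
    (integrable_pow_gaussianReal 0 1 n).const_mul c
  have h1 : Integrable (fun z ↦ c₁ * z) (gaussianReal 0 1) := by simpa using h 1 c₁
  simp only [hf]
  rw [integral_add (by fun_prop) (h 6 c₆), integral_add (by fun_prop) (h 5 c₅),
    integral_add (by fun_prop) (h 4 c₄), integral_add (by fun_prop) (h 3 c₃),
    integral_add (by fun_prop) (h 2 c₂), integral_add (by fun_prop) h1]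
  have m1 : ∫ z, c₁ * z ∂gaussianReal 0 1 = 0 := by
    rw [integral_const_mul, integral_id_gaussianReal, mul_zero]
  have hrec := integral_pow_add_two_gaussianReal
  have m2 : ∫ z, z ^ 2 ∂gaussianReal 0 1 = 1 := by simpa using hrec 0
  have m3 : ∫ z, z ^ 3 ∂gaussianReal 0 1 = 0 := by simpa using hrec 1
  have m4 : ∫ z, z ^ 4 ∂gaussianReal 0 1 = 3 := by rw [hrec 2, m2]; norm_num
  have m5 : ∫ z, z ^ 5 ∂gaussianReal 0 1 = 0 := by rw [hrec 3, m3, mul_zero]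
  have m6 : ∫ z, z ^ 6 ∂gaussianReal 0 1 = 15 := by rw [hrec 4, m4]; norm_num
  simp only [integral_const_mul, integral_const, probReal_univ, one_smul, m1, m2, m3, m4, m5, m6]
  ring

lemma integral_quadratic_pow_gaussianReal (A B C : ℝ) :
    ∫ z, A * z ^ 2 + B * z + C ∂gaussianReal 0 1 = A + C ∧
    ∫ z, (A * z ^ 2 + B * z + C) ^ 2 ∂gaussianReal 0 1 = (2 * A ^ 2 + B ^ 2) + (A + C) ^ 2 ∧
    ∫ z, (A * z ^ 2 + B * z + C) ^ 3 ∂gaussianReal 0 1 =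
      (8 * A ^ 3 + 6 * A * B ^ 2) + 3 * (A + C) * (2 * A ^ 2 + B ^ 2) + (A + C) ^ 3 := by
  refine ⟨?_, ?_, ?_⟩
  · rw [integral_polynomial_gaussianReal C B A 0 0 0 0 fun z ↦ by ring]
    ring
  · rw [integral_polynomial_gaussianReal (C ^ 2) (2 * B * C) (B ^ 2 + 2 * A * C) (2 * A * B) (A ^ 2)
      0 0 fun z ↦ by ring]
    ring
  · rw [integral_polynomial_gaussianReal (C ^ 3) (3 * B * C ^ 2) (3 * A * C ^ 2 + 3 * B ^ 2 * C)
      (B ^ 3 + 6 * A * B * C) (3 * A ^ 2 * C + 3 * A * B ^ 2) (3 * A ^ 2 * B) (A ^ 3)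
      fun z ↦ by ring]
    ring

/-- The mean, the variance `2A² + B²` and the third cumulant `8A³ + 6AB²` of the law pin down `A`,
`B²` and `C`. -/
lemma quadratic_coeffs_eq_of_map_gaussianReal_eq {A B C A' B' C' : ℝ} (hB : 0 ≤ B) (hB' : 0 ≤ B')
    (h : (gaussianReal 0 1).map (fun z ↦ A * z ^ 2 + B * z + C) =
      (gaussianReal 0 1).map (fun z ↦ A' * z ^ 2 + B' * z + C')) :
    A = A' ∧ B = B' ∧ C = C' := by
  have hmoment (k : ℕ) : ∫ z, (A * z ^ 2 + B * z + C) ^ k ∂gaussianReal 0 1 =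
      ∫ z, (A' * z ^ 2 + B' * z + C') ^ k ∂gaussianReal 0 1 := by
    calc ∫ z, (A * z ^ 2 + B * z + C) ^ k ∂gaussianReal 0 1
        = ∫ y, y ^ k ∂(gaussianReal 0 1).map (fun z ↦ A * z ^ 2 + B * z + C) :=
          (integral_map (by fun_prop) (continuous_pow k).aestronglyMeasurable).symm
      _ = ∫ y, y ^ k ∂(gaussianReal 0 1).map (fun z ↦ A' * z ^ 2 + B' * z + C') := by rw [h]
      _ = _ := integral_map (by fun_prop) (continuous_pow k).aestronglyMeasurable
  obtain ⟨e1, e2, e3⟩ := integral_quadratic_pow_gaussianReal A B C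
  obtain ⟨e1', e2', e3'⟩ := integral_quadratic_pow_gaussianReal A' B' C'
  have hmean : A + C = A' + C' := by simpa [e1, e1'] using hmoment 1
  have hvar : 2 * A ^ 2 + B ^ 2 = 2 * A' ^ 2 + B' ^ 2 := by
    linear_combination (by simpa [e2, e2'] using hmoment 2 : _ = _) - (A + C + A' + C') * hmean
  have hskew : 8 * A ^ 3 + 6 * A * B ^ 2 = 8 * A' ^ 3 + 6 * A' * B' ^ 2 := by
    linear_combination (by simpa [e3, e3'] using hmoment 3 : _ = _) - 3 * (A + C) * hvar
      - (3 * (2 * A' ^ 2 + B' ^ 2) + (A + C) ^ 2 + (A + C) * (A' + C') + (A' + C') ^ 2) * hmean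
  have hA : A = A' := by
    have hprod : (A - A') * (2 * (A - A') ^ 2 + 3 * B ^ 2 + 3 * B' ^ 2) = 0 := by
      linear_combination hskew - 3 * (A + A') * hvar
    rcases mul_eq_zero.1 hprod with hdiff | hsum
    · linarith
    · have : (A - A') ^ 2 = 0 := by nlinarith [sq_nonneg (A - A'), sq_nonneg B, sq_nonneg B']
      linarith [pow_eq_zero_iff two_ne_zero |>.1 this]
  have hB : B = B' :=
    (pow_left_inj₀ hB hB' two_ne_zero).1 (by linear_combination hvar - 2 * (A + A') * hA)
  exact ⟨hA, hB, by linarith⟩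

lemma gaussPdf_eq (m : ℝ) {s : ℝ} (hs : 0 < s) (x : ℝ) :
    gaussPdf m s x = (√(2 * π) * s)⁻¹ * exp (-((x - m) / s) ^ 2 / 2) := by
  rw [gaussPdf, sqrt_mul (by positivity), sqrt_sq hs.le]
  congr 2
  field_simp

lemma gaussPdf_pos (m : ℝ) {s : ℝ} (hs : 0 < s) (x : ℝ) : 0 < gaussPdf m s x := by
  rw [gaussPdf_eq m hs]
  positivity

/-- `log (q₀ φ₀(x) / (q₁ φ₁(x)))` in the coordinate `w = (x - m₁) / s₁`, where `κ = q₁ / q₀`,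
`r = s₁ / s₀` and `δ = (m₀ - m₁) / s₁`. -/
noncomputable def logOdds (κ r δ w : ℝ) : ℝ :=
  log r - log κ + w ^ 2 / 2 - r ^ 2 * (w - δ) ^ 2 / 2

@[fun_prop]
lemma measurable_logOdds (κ r δ : ℝ) : Measurable (logOdds κ r δ) := by
  unfold logOdds
  fun_prop

lemma mul_gaussPdf_eq_exp_logOdds_mul {q₀ q₁ s₀ s₁ : ℝ} (m₀ m₁ : ℝ) (hq₀ : 0 < q₀) (hq₁ : 0 < q₁)
    (hs₀ : 0 < s₀) (hs₁ : 0 < s₁) (x : ℝ) :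
    q₀ * gaussPdf m₀ s₀ x =
      exp (logOdds (q₁ / q₀) (s₁ / s₀) ((m₀ - m₁) / s₁) ((x - m₁) / s₁)) *
        (q₁ * gaussPdf m₁ s₁ x) := by
  set w := (x - m₁) / s₁
  set r := s₁ / s₀
  have hx : (x - m₀) / s₀ = r * (w - (m₀ - m₁) / s₁) := by
    simp only [w, r]
    field_simp
    ring
  have hexp : exp (logOdds (q₁ / q₀) r ((m₀ - m₁) / s₁) w) * exp (-w ^ 2 / 2) =
      r / (q₁ / q₀) * exp (-(r * (w - (m₀ - m₁) / s₁)) ^ 2 / 2) := by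
    have hlog : log (r / (q₁ / q₀)) = log r - log (q₁ / q₀) :=
      log_div (by positivity) (by positivity)
    rw [← exp_add, logOdds, ← exp_log (show 0 < r / (q₁ / q₀) by positivity), ← exp_add, hlog]
    congr 1
    ring
  rw [gaussPdf_eq m₀ hs₀, gaussPdf_eq m₁ hs₁, hx]
  calc q₀ * ((√(2 * π) * s₀)⁻¹ * exp (-(r * (w - (m₀ - m₁) / s₁)) ^ 2 / 2))
      = q₁ * (√(2 * π) * s₁)⁻¹ * (r / (q₁ / q₀) * exp (-(r * (w - (m₀ - m₁) / s₁)) ^ 2 / 2)) := by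
        simp only [r]
        field_simp
    _ = _ := by rw [← hexp]; ring

lemma posterior_eq_inv_one_add_exp_logOdds (q m s : Fin 2 → Fin 2 → ℝ) (a : Fin 2)
    (hq : ∀ i, 0 < q i a) (hs : ∀ i, 0 < s i a) (x : ℝ) :
    posterior q m s x a = (1 + exp (logOdds (q 1 a / q 0 a) (s 1 a / s 0 a)
      ((m 0 a - m 1 a) / s 1 a) ((x - m 1 a) / s 1 a)))⁻¹ := by
  have hpos : 0 < q 1 a * gaussPdf (m 1 a) (s 1 a) x := mul_pos (hq 1) (gaussPdf_pos _ (hs 1) x)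
  rw [_root_.posterior, mul_gaussPdf_eq_exp_logOdds_mul (m 0 a) (m 1 a) (hq 0) (hq 1) (hs 0) (hs 1),
    ← one_add_mul, div_mul_cancel_right₀ hpos.ne']

lemma gaussianReal_preimage_sub_div (μ σ m s : ℝ) {S : Set ℝ} (hS : MeasurableSet S) :
    gaussianReal μ (σ ^ 2).toNNReal ((fun x ↦ (x - m) / s) ⁻¹' S) =
      gaussianReal ((μ - m) / s) ((σ / s) ^ 2).toNNReal S := by
  rw [← Measure.map_apply (by fun_prop) hS, show (fun x ↦ (x - m) / s) = (· / s) ∘ (· - m) from rfl,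
    ← Measure.map_map (by fun_prop) (by fun_prop), gaussianReal_map_sub_const,
    gaussianReal_map_div_const]
  congr
  ext
  simp [div_pow, max_eq_left (sq_nonneg σ), div_nonneg (sq_nonneg σ) (sq_nonneg s)]

lemma gaussianReal_posterior_ge_eq (q m s : Fin 2 → Fin 2 → ℝ) (a i : Fin 2)
    (hq : ∀ j, 0 < q j a) (hs : ∀ j, 0 < s j a) (t : ℝ) :
    gaussianReal (m i a) (s i a ^ 2).toNNReal {x | posterior q m s x a ≥ t} =
      gaussianReal ((m i a - m 1 a) / s 1 a) ((s i a / s 1 a) ^ 2).toNNReal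
        {w | (1 + exp (logOdds (q 1 a / q 0 a) (s 1 a / s 0 a) ((m 0 a - m 1 a) / s 1 a) w))⁻¹
          ≥ t} := by
  rw [← gaussianReal_preimage_sub_div _ _ _ _ (measurableSet_le measurable_const (by fun_prop))]
  congr 1
  ext x
  simp [posterior_eq_inv_one_add_exp_logOdds q m s a hq hs]

lemma inv_one_add_exp_le_inv_one_add_exp_iff {x y : ℝ} :
    (1 + exp x)⁻¹ ≤ (1 + exp y)⁻¹ ↔ y ≤ x := by
  rw [inv_le_inv₀ (by positivity) (by positivity), add_le_add_iff_left, exp_le_exp]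

lemma map_eq_of_measure_inv_one_add_exp_ge_eq {μ : Measure ℝ} [IsFiniteMeasure μ] {f g : ℝ → ℝ}
    (hf : Measurable f) (hg : Measurable g)
    (h : ∀ t ∈ Ioo (0 : ℝ) 1, μ {w | (1 + exp (f w))⁻¹ ≥ t} = μ {w | (1 + exp (g w))⁻¹ ≥ t}) :
    μ.map f = μ.map g := by
  refine Measure.ext_of_Iic _ _ fun u ↦ ?_
  have ht : (1 + exp u)⁻¹ ∈ Ioo (0 : ℝ) 1 :=
    ⟨by positivity, inv_lt_one_of_one_lt₀ (by linarith [exp_pos u])⟩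
  simpa [Set.preimage, Measure.map_apply hf measurableSet_Iic,
    Measure.map_apply hg measurableSet_Iic, inv_one_add_exp_le_inv_one_add_exp_iff] using h _ ht

lemma logOdds_params_eq_of_map_gaussianReal_eq {κ r δ κ' r' δ' : ℝ} (hκ : 0 < κ) (hκ' : 0 < κ')
    (hr : 0 < r) (hr' : 0 < r') (hδ : 0 ≤ δ) (hδ' : 0 ≤ δ')
    (h : (gaussianReal 0 1).map (logOdds κ r δ) = (gaussianReal 0 1).map (logOdds κ' r' δ')) :
    κ = κ' ∧ r = r' ∧ δ = δ' := by
  have hquad (κ r δ : ℝ) : logOdds κ r δ =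
      fun w ↦ (1 - r ^ 2) / 2 * w ^ 2 + r ^ 2 * δ * w + (log r - log κ - r ^ 2 * δ ^ 2 / 2) := by
    funext w
    rw [logOdds]
    ring
  rw [hquad, hquad] at h
  obtain ⟨hA, hB, hC⟩ :=
    quadratic_coeffs_eq_of_map_gaussianReal_eq (by positivity) (by positivity) h
  obtain rfl : r = r' := (pow_left_inj₀ hr.le hr'.le two_ne_zero).1 (by linarith)
  obtain rfl : δ = δ' := mul_left_cancel₀ (by positivity) hB
  exact ⟨log_injOn_pos hκ hκ' (by linarith), rfl, rfl⟩

theorem statement2_general (q m s : Fin 2 → Fin 2 → ℝ)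
    (hq : ∀ i a, 0 < q i a)
    (hs : ∀ i a, 0 < s i a)
    (hm0 : m 0 0 ≥ m 1 0) (hm1 : m 0 1 ≥ m 1 1) :
    (∀ t ∈ Set.Ioo (0 : ℝ) 1, ∀ i : Fin 2,
        gaussianReal (m i 0) ((s i 0 ^ 2).toNNReal) {x | posterior q m s x 0 ≥ t} =
        gaussianReal (m i 1) ((s i 1 ^ 2).toNNReal) {x | posterior q m s x 1 ≥ t}) ↔
      ((m 0 1 - m 1 1) / s 1 1 = (m 0 0 - m 1 0) / s 1 0 ∧
        s 1 1 / s 0 1 = s 1 0 / s 0 0 ∧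
        q 1 0 / q 0 0 = q 1 1 / q 0 1) := by
  have hrate (a i : Fin 2) (t : ℝ) := gaussianReal_posterior_ge_eq q m s a i (hq · a) (hs · a) t
  simp only [hrate]
  constructor
  · intro H
    have hlaw := map_eq_of_measure_inv_one_add_exp_ge_eq (μ := gaussianReal 0 1)
      (measurable_logOdds _ _ _) (measurable_logOdds _ _ _) fun t ht ↦ by
        simpa [(hs 1 0).ne', (hs 1 1).ne'] using H t ht 1
    obtain ⟨hκ, hr, hδ⟩ := logOdds_params_eq_of_map_gaussianReal_eq
      (div_pos (hq 1 0) (hq 0 0)) (div_pos (hq 1 1) (hq 0 1))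
      (div_pos (hs 1 0) (hs 0 0)) (div_pos (hs 1 1) (hs 0 1))
      (div_nonneg (sub_nonneg.2 hm0) (hs 1 0).le) (div_nonneg (sub_nonneg.2 hm1) (hs 1 1).le) hlaw
    exact ⟨hδ.symm, hr.symm, hκ⟩
  · rintro ⟨hδ, hr, hκ⟩ t -
    refine Fin.forall_fin_two.2 ⟨?_, ?_⟩
    · rw [← inv_div (s 1 0) (s 0 0), ← inv_div (s 1 1) (s 0 1), hδ, hr, hκ]
    · simp [(hs 1 0).ne', (hs 1 1).ne', hδ, hr, hκ]

/-- in the binary univariate Gaussian mixture setup (with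
`μ_{00} ≥ μ_{10}` and `μ_{01} ≥ μ_{11}`), every group-aware threshold classifier
`1{η(x,a) ≥ t}`, `t ∈ (0,1)`, has equal class-conditional acceptance rates in both
groups for both classes (exact equal opportunity and equalized odds) **iff** the
parametric ideality conditions
`(μ_{01} − μ_{11})/σ_{11} = (μ_{00} − μ_{10})/σ_{10}`, `σ_{11}/σ_{01} = σ_{10}/σ_{00}`,
`q_{10}/q_{00} = q_{11}/q_{01}` hold. -/
theorem statement2 (q m s : Fin 2 → Fin 2 → ℝ)
    (hq : ∀ i a, 0 < q i a) (hqsum : ∑ i, ∑ a, q i a = 1)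
    (hs : ∀ i a, 0 < s i a)
    (hm0 : m 0 0 ≥ m 1 0) (hm1 : m 0 1 ≥ m 1 1) :
    (∀ t ∈ Set.Ioo (0 : ℝ) 1, ∀ i : Fin 2,
        gaussianReal (m i 0) ((s i 0 ^ 2).toNNReal) {x | posterior q m s x 0 ≥ t} =
        gaussianReal (m i 1) ((s i 1 ^ 2).toNNReal) {x | posterior q m s x 1 ≥ t}) ↔
      ((m 0 1 - m 1 1) / s 1 1 = (m 0 0 - m 1 0) / s 1 0 ∧
        s 1 1 / s 0 1 = s 1 0 / s 0 0 ∧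
        q 1 0 / q 0 0 = q 1 1 / q 0 1) :=
  statement2_general q m s hq hs hm0 hm1
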